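/- arXiv:1009.2045 — 7 statements merged into one kernel-verified Lean document; each statement's English description precedes it below -/
import Mathlib

section
/- For every integer d ≥ 1 and every x in (0, 1/4), D_d'(x) > 0; in particular D_d is strictly increasing on (0, 1/4). -/
/-!
With `t = π x ∈ (0, π/4)` we have `D_d = F ^ d - G ^ d` for `G t = sin t / t` and
`F t = 1 - cos t + sin t + G t`. Both are positive, `G` is decreasing because `t cos t < sin t`
(that is, `t < tan t`), and `F` is increasing: `F' = sin t + cos t + G'`, and
`t² (sin t + cos t) + t cos t - sin t ≥ t² (1 - t/2 - t²/2) > 0` for `t < 1`, by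
`cos t ≥ 1 - t²/2` and `sin t < t`. Hence `D_d' = π (d F^(d-1) F' - d G^(d-1) G') > 0`.
-/

open Real Set

noncomputable def D (d : ℕ) (x : ℝ) : ℝ :=
  (1 - Real.cos (π * x) + Real.sin (π * x) + Real.sin (π * x) / (π * x)) ^ d
    - (Real.sin (π * x) / (π * x)) ^ d

lemma pow_sub_pow_hasDerivAt_pos {f g : ℝ → ℝ} {f' g' x : ℝ} {d : ℕ}
    (hf : HasDerivAt f f' x) (hg : HasDerivAt g g' x) (hfx : 0 < f x) (hf' : 0 < f')
    (hgx : 0 < g x) (hg' : g' < 0) (hd : d ≠ 0) :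
    ∃ y, 0 < y ∧ HasDerivAt (fun z ↦ f z ^ d - g z ^ d) y x := by
  refine ⟨_, ?_, (hf.pow d).sub (hg.pow d)⟩
  have hd : (0 : ℝ) < d := by exact_mod_cast Nat.pos_of_ne_zero hd
  have hF : 0 < d * f x ^ (d - 1) * f' := by positivity
  have hG : 0 < d * g x ^ (d - 1) * -g' := by have := neg_pos.mpr hg'; positivity
  linarith

lemma hasDerivAt_sin_div_self {t : ℝ} (ht : t ≠ 0) :
    HasDerivAt (fun t ↦ sin t / t) ((t * cos t - sin t) / t ^ 2) t :=
  ((hasDerivAt_sin t).div (hasDerivAt_id t) ht).congr_deriv (by simp only [id]; ring)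

lemma mul_cos_lt_sin {t : ℝ} (h0 : 0 < t) (hπ : t < π / 2) : t * cos t < sin t := by
  have hcos : 0 < cos t := cos_pos_of_mem_Ioo ⟨by linarith [pi_pos], hπ⟩
  have htan := lt_tan h0 hπ
  rwa [tan_eq_sin_div_cos, lt_div_iff₀ hcos] at htan

lemma sin_add_cos_add_deriv_sin_div_self_pos {t : ℝ} (h0 : 0 < t) (h1 : t < 1) :
    0 < sin t + cos t + (t * cos t - sin t) / t ^ 2 := by
  have hsin : 0 < sin t := sin_pos_of_pos_of_lt_pi h0 (by linarith [pi_gt_three])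
  have hsin_lt : sin t < t := sin_lt h0
  have hcos : 1 - t ^ 2 / 2 ≤ cos t := one_sub_sq_div_two_le_cos
  have hnum : 0 < t ^ 2 * (sin t + cos t) + (t * cos t - sin t) := by
    have hpoly : 0 < t ^ 2 * (1 - t / 2 - t ^ 2 / 2) := by
      have : 0 < 1 - t / 2 - t ^ 2 / 2 := by nlinarith
      positivity
    nlinarith [mul_le_mul_of_nonneg_left hcos (by positivity : 0 ≤ t ^ 2 + t)]
  have ht2 : 0 < t ^ 2 := by positivity
  have : sin t + cos t + (t * cos t - sin t) / t ^ 2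
      = (t ^ 2 * (sin t + cos t) + (t * cos t - sin t)) / t ^ 2 := by
    field_simp
  rw [this]
  positivity

lemma exists_hasDerivAt_pos_of_mem_Ioo {d : ℕ} (hd : d ≠ 0) {t : ℝ} (ht : t ∈ Ioo 0 (π / 4)) :
    ∃ y, 0 < y ∧ HasDerivAt
      (fun t ↦ (1 - cos t + sin t + sin t / t) ^ d - (sin t / t) ^ d) y t := by
  obtain ⟨h0, hπ⟩ := ht
  have hsin : 0 < sin t := sin_pos_of_pos_of_lt_pi h0 (by linarith [pi_pos])
  have hG := hasDerivAt_sin_div_self h0.ne'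
  have hF : HasDerivAt (fun t ↦ 1 - cos t + sin t + sin t / t)
      (sin t + cos t + (t * cos t - sin t) / t ^ 2) t :=
    ((((hasDerivAt_const t 1).sub (hasDerivAt_cos t)).add (hasDerivAt_sin t)).add hG).congr_deriv
      (by ring)
  refine pow_sub_pow_hasDerivAt_pos hF hG ?_ ?_ (div_pos hsin h0) ?_ hd
  · have := cos_le_one t
    have := div_pos hsin h0
    linarith
  · exact sin_add_cos_add_deriv_sin_div_self_pos h0 (by linarith [pi_lt_four])
  · refine div_neg_of_neg_of_pos ?_ (by positivity)
    linarith [mul_cos_lt_sin h0 (by linarith [pi_pos])]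

lemma exists_hasDerivAt_D_pos {d : ℕ} (hd : d ≠ 0) {x : ℝ} (hx : x ∈ Ioo (0 : ℝ) (1 / 4)) :
    ∃ y, 0 < y ∧ HasDerivAt (D d) y x := by
  have hπx : π * x ∈ Ioo 0 (π / 4) := ⟨mul_pos pi_pos hx.1, by nlinarith [pi_pos, hx.2]⟩
  obtain ⟨y, hy, hΦ⟩ := exists_hasDerivAt_pos_of_mem_Ioo hd hπx
  have hlin : HasDerivAt (fun x ↦ π * x) π x := by simpa using (hasDerivAt_id x).const_mul π
  exact ⟨y * π, mul_pos hy pi_pos, hΦ.comp x hlin⟩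

theorem stmt_5 : ∀ d : ℕ, 1 ≤ d →
    (∀ x ∈ Ioo (0 : ℝ) (1 / 4), deriv (D d) x > 0) ∧
    StrictMonoOn (D d) (Ioo (0 : ℝ) (1 / 4)) := by
  intro d hd
  have hD (x : ℝ) (hx : x ∈ Ioo (0 : ℝ) (1 / 4)) : ∃ y, 0 < y ∧ HasDerivAt (D d) y x :=
    exists_hasDerivAt_D_pos (Nat.one_le_iff_ne_zero.mp hd) hx
  have hderiv : ∀ x ∈ Ioo (0 : ℝ) (1 / 4), deriv (D d) x > 0 := fun x hx ↦ by
    obtain ⟨y, hy, h⟩ := hD x hx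
    rwa [h.deriv]
  refine ⟨hderiv, strictMonoOn_of_deriv_pos (convex_Ioo 0 (1 / 4)) ?_ ?_⟩
  · intro x hx
    obtain ⟨y, -, h⟩ := hD x hx
    exact h.continuousAt.continuousWithinAt
  · rwa [interior_Ioo]
end

section
/- There exists Δ with 0 < Δ < 1/4 such that for every integer d ≥ 1, D_d''(x) > 0 for all x in (0, Δ); i.e., D_d is strictly convex on (0, Δ) uniformly in d. -/
open Real Set

open Filter Topology

/-! Write `D d x = G (π * x)` with `G = F ^ d - S ^ d`, where `S t = sin t / t` and
`F = 1 - cos + sin + S`. On `0 < t ≤ 1/3` we have `F ≥ 1`, `0 < S ≤ 1`, `|S'| ≤ |F'|` and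
`S'' ≤ 0 < F''`, so each term of `(F ^ d)'' = d (d - 1) F ^ (d - 2) F' ^ 2 + d F ^ (d - 1) F''`
dominates the corresponding term of `(S ^ d)''`, uniformly in `d`. Hence `G'' > 0` there, and
`D_d'' x = π ^ 2 G'' (π x) > 0` for `0 < x < 1/12`, as `π / 12 < 1/3`. -/

/-- Taylor: `sin t - t cos t = t³/3 + O(t⁵)`, `2 (sin t - t cos t) - t² sin t = -t³/3 + O(t⁵)`. -/
theorem sin_sub_mul_cos_bounds {t : ℝ} (ht₀ : 0 < t) (ht₁ : t ≤ 1) :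
    0 < sin t - t * cos t ∧
    -(t ^ 3 / 2) ≤ 2 * (sin t - t * cos t) - t ^ 2 * sin t ∧
    2 * (sin t - t * cos t) - t ^ 2 * sin t < 0 := by
  have habs : |t| ≤ 1 := by rwa [abs_of_pos ht₀]
  have hs := abs_le.1 (sin_bound habs)
  have hc := abs_le.1 (cos_bound habs)
  rw [abs_of_pos ht₀] at hs hc
  have htc := And.intro (mul_le_mul_of_nonneg_left hc.1 ht₀.le)
    (mul_le_mul_of_nonneg_left hc.2 ht₀.le)
  have hts := And.intro (mul_le_mul_of_nonneg_left hs.1 (sq_nonneg t))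
    (mul_le_mul_of_nonneg_left hs.2 (sq_nonneg t))
  have h3 : 0 < t ^ 3 := by positivity
  have h5 : t ^ 5 ≤ t ^ 3 := pow_le_pow_of_le_one ht₀.le ht₁ (by norm_num)
  have h7 : t ^ 7 ≤ t ^ 3 := pow_le_pow_of_le_one ht₀.le ht₁ (by norm_num)
  refine ⟨?_, ?_, ?_⟩ <;> linarith

theorem deriv_deriv_comp_mul_left (f : ℝ → ℝ) (c x : ℝ) :
    deriv (deriv fun y => f (c * y)) x = c ^ 2 * deriv (deriv f) (c * x) := by
  have h : (deriv fun y => f (c * y)) = fun y => c * deriv f (c * y) :=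
    funext fun y => deriv_comp_mul_left c f y
  rw [h, deriv_const_mul_field']
  simp only [deriv_comp_mul_left c (deriv f), smul_eq_mul]
  ring

noncomputable def powSecondDeriv (n : ℕ) (a a' a'' : ℝ) : ℝ :=
  n * (n - 1 : ℕ) * a ^ (n - 2) * a' ^ 2 + n * a ^ (n - 1) * a''

theorem hasDerivAt_pow_deriv {f f' : ℝ → ℝ} {f'' x : ℝ} (n : ℕ) (hf : HasDerivAt f (f' x) x)
    (hf' : HasDerivAt f' f'' x) :
    HasDerivAt (fun y => n * f y ^ (n - 1) * f' y) (powSecondDeriv n (f x) (f' x) f'') x := by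
  refine (((hf.pow (n - 1)).const_mul (n : ℝ)).mul hf').congr_deriv ?_
  rw [powSecondDeriv, Nat.sub_sub]
  simp only [Pi.pow_apply]
  ring

theorem deriv_deriv_pow_sub_pow {f f' g g' : ℝ → ℝ} {f'' g'' x : ℝ} (n : ℕ)
    (hf : ∀ᶠ y in 𝓝 x, HasDerivAt f (f' y) y) (hf' : HasDerivAt f' f'' x)
    (hg : ∀ᶠ y in 𝓝 x, HasDerivAt g (g' y) y) (hg' : HasDerivAt g' g'' x) :
    deriv (deriv fun y => f y ^ n - g y ^ n) x =
      powSecondDeriv n (f x) (f' x) f'' - powSecondDeriv n (g x) (g' x) g'' := by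
  have hderiv : (deriv fun y => f y ^ n - g y ^ n) =ᶠ[𝓝 x]
      fun y => n * f y ^ (n - 1) * f' y - n * g y ^ (n - 1) * g' y := by
    filter_upwards [hf, hg] with y hfy hgy
    exact ((hfy.pow n).sub (hgy.pow n)).deriv
  rw [hderiv.deriv_eq]
  exact ((hasDerivAt_pow_deriv n hf.self_of_nhds hf').sub
    (hasDerivAt_pow_deriv n hg.self_of_nhds hg')).deriv

theorem powSecondDeriv_lt_powSecondDeriv {n : ℕ} (hn : 1 ≤ n) {a a' a'' b b' b'' : ℝ}
    (ha : 1 ≤ a) (hb₀ : 0 ≤ b) (hb₁ : b ≤ 1) (hb' : b' ^ 2 ≤ a' ^ 2) (ha'' : 0 < a'')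
    (hb'' : b'' ≤ 0) : powSecondDeriv n b b' b'' < powSecondDeriv n a a' a'' := by
  have hsq : b ^ (n - 2) * b' ^ 2 ≤ a ^ (n - 2) * a' ^ 2 :=
    calc b ^ (n - 2) * b' ^ 2 ≤ 1 * a' ^ 2 :=
          mul_le_mul (pow_le_one₀ hb₀ hb₁) hb' (sq_nonneg _) zero_le_one
      _ ≤ a ^ (n - 2) * a' ^ 2 := by gcongr; exact one_le_pow₀ ha
  have hlast : b ^ (n - 1) * b'' < a ^ (n - 1) * a'' :=
    (mul_nonpos_of_nonneg_of_nonpos (pow_nonneg hb₀ _) hb'').trans_lt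
      (mul_pos (pow_pos (zero_lt_one.trans_le ha) _) ha'')
  have hn' : (0 : ℝ) < n := by exact_mod_cast hn
  unfold powSecondDeriv
  have := mul_le_mul_of_nonneg_left hsq (by positivity : (0 : ℝ) ≤ n * (n - 1 : ℕ))
  have := mul_lt_mul_of_pos_left hlast hn'
  linarith

namespace D

noncomputable def S (t : ℝ) : ℝ := sin t / t

noncomputable def S' (t : ℝ) : ℝ := -(sin t - t * cos t) / t ^ 2

noncomputable def S'' (t : ℝ) : ℝ := (2 * (sin t - t * cos t) - t ^ 2 * sin t) / t ^ 3

noncomputable def F (t : ℝ) : ℝ := 1 - cos t + sin t + S t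

noncomputable def F' (t : ℝ) : ℝ := sin t + cos t + S' t

noncomputable def F'' (t : ℝ) : ℝ := cos t - sin t + S'' t

variable {t : ℝ}

theorem hasDerivAt_S (ht : t ≠ 0) : HasDerivAt S (S' t) t := by
  refine ((hasDerivAt_sin t).div (hasDerivAt_id t) ht).congr_deriv ?_
  simp only [S', id]
  ring

theorem hasDerivAt_S' (ht : t ≠ 0) : HasDerivAt S' (S'' t) t := by
  have hnum := (((hasDerivAt_sin t).sub ((hasDerivAt_id t).mul (hasDerivAt_cos t))).neg)
  refine (hnum.div ((hasDerivAt_id t).pow 2) (pow_ne_zero 2 ht)).congr_deriv ?_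
  simp only [S'', id, Pi.pow_apply, Pi.neg_apply, Pi.sub_apply, Pi.mul_apply]
  field_simp
  ring

theorem hasDerivAt_F (ht : t ≠ 0) : HasDerivAt F (F' t) t := by
  refine ((((hasDerivAt_cos t).const_sub 1).add (hasDerivAt_sin t)).add
    (hasDerivAt_S ht)).congr_deriv ?_
  simp only [F']
  ring

theorem hasDerivAt_F' (ht : t ≠ 0) : HasDerivAt F' (F'' t) t := by
  refine (((hasDerivAt_sin t).add (hasDerivAt_cos t)).add (hasDerivAt_S' ht)).congr_deriv ?_
  simp only [F'']
  ring

theorem S_pos (ht₀ : 0 < t) (htπ : t < π) : 0 < S t :=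
  div_pos (sin_pos_of_pos_of_lt_pi ht₀ htπ) ht₀

theorem S_le_one (ht₀ : 0 < t) : S t ≤ 1 := (div_le_one ht₀).2 (sin_le ht₀.le)

theorem one_le_F (ht₀ : 0 < t) (ht₁ : t ≤ 1) : 1 ≤ F t := by
  have hcos : cos t ≤ S t := by
    rw [S, le_div_iff₀ ht₀]
    linarith [(sin_sub_mul_cos_bounds ht₀ ht₁).1]
  have hsin : 0 ≤ sin t := sin_nonneg_of_nonneg_of_le_pi ht₀.le (by linarith [pi_gt_three])
  unfold F
  linarith

theorem S'_sq_le_F'_sq (ht₀ : 0 < t) (ht₁ : t ≤ 1) : S' t ^ 2 ≤ F' t ^ 2 := by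
  obtain ⟨hpos, -, hneg⟩ := sin_sub_mul_cos_bounds ht₀ ht₁
  have ht2 : 0 < t ^ 2 := by positivity
  have hS'_nonpos : S' t ≤ 0 := div_nonpos_of_nonpos_of_nonneg (by linarith) ht2.le
  have hS'_ge : -(sin t / 2) ≤ S' t := by
    rw [S', le_div_iff₀ ht2]
    linarith
  have hcos : 0 < cos t := cos_pos_of_le_one (by rwa [abs_of_pos ht₀])
  exact sq_le_sq' (by rw [F']; linarith) (by rw [F']; linarith)

theorem S''_nonpos (ht₀ : 0 < t) (ht₁ : t ≤ 1) : S'' t ≤ 0 :=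
  div_nonpos_of_nonpos_of_nonneg (sin_sub_mul_cos_bounds ht₀ ht₁).2.2.le (by positivity)

theorem F''_pos (ht₀ : 0 < t) (ht₁ : t ≤ 1 / 3) : 0 < F'' t := by
  have hS'' : -(1 / 2) ≤ S'' t := by
    rw [S'', le_div_iff₀ (by positivity)]
    linarith [(sin_sub_mul_cos_bounds ht₀ (by linarith)).2.1]
  have := sin_le ht₀.le
  have := one_sub_sq_div_two_le_cos (x := t)
  unfold F''
  nlinarith

theorem deriv_deriv_F_pow_sub_S_pow_pos {d : ℕ} (hd : 1 ≤ d) (ht₀ : 0 < t) (ht₁ : t ≤ 1 / 3) :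
    0 < deriv (deriv fun t => F t ^ d - S t ^ d) t := by
  have hne : ∀ᶠ y in 𝓝 t, y ≠ 0 := eventually_ne_nhds ht₀.ne'
  have ht₁' : t ≤ 1 := by linarith
  rw [deriv_deriv_pow_sub_pow d (hne.mono fun _ => hasDerivAt_F) (hasDerivAt_F' ht₀.ne')
    (hne.mono fun _ => hasDerivAt_S) (hasDerivAt_S' ht₀.ne'), sub_pos]
  exact powSecondDeriv_lt_powSecondDeriv hd (one_le_F ht₀ ht₁')
    (S_pos ht₀ (by linarith [pi_gt_three])).le (S_le_one ht₀) (S'_sq_le_F'_sq ht₀ ht₁')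
    (F''_pos ht₀ ht₁) (S''_nonpos ht₀ ht₁')

end D

theorem stmt_6 : ∃ Δ : ℝ, 0 < Δ ∧ Δ < 1 / 4 ∧
    ∀ d : ℕ, 1 ≤ d → ∀ x ∈ Ioo (0 : ℝ) Δ, deriv (deriv (D d)) x > 0 := by
  refine ⟨1 / 12, by norm_num, by norm_num, fun d hd x ⟨hx₀, hx₁⟩ => ?_⟩
  have hπx : π * x ≤ 1 / 3 := by nlinarith [pi_lt_four, pi_pos]
  change 0 < deriv (deriv fun x => D.F (π * x) ^ d - D.S (π * x) ^ d) x
  rw [deriv_deriv_comp_mul_left fun t => D.F t ^ d - D.S t ^ d]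
  exact mul_pos (by positivity) (D.deriv_deriv_F_pow_sub_S_pow_pos hd (by positivity) hπx)
end

section
/- Fix a constant r > 0. If for each integer d ≥ 1, x_d ∈ (0, 1/4) satisfies D_d(x_d) = r, then lim_{d→∞} x_d = 0. -/
/-!
For `0 < t < π / 2` we have `t < tan t`, i.e. `cos t < sin t / t`, so the base of the first power
in `D d x` is at least `1 + sin (π x)`, while `(sin t / t) ^ d ≤ 1`. Bernoulli's inequality and
Jordan's inequality `2 x ≤ sin (π x)` then give `2 d x ≤ D d x`, hence `0 < x d ≤ r / (2 d)`.
-/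

open Real Set Filter

theorem Real.cos_lt_sin_div_self {t : ℝ} (ht₀ : 0 < t) (ht : t < π / 2) : cos t < sin t / t := by
  have hcos : 0 < cos t := cos_pos_of_mem_Ioo ⟨by linarith, ht⟩
  have htan : t * cos t < sin t := by
    simpa [tan_eq_sin_div_cos, lt_div_iff₀ hcos] using lt_tan ht₀ ht
  rw [lt_div_iff₀ ht₀]
  linarith

theorem Real.sin_div_self_pow_le_one {t : ℝ} (ht : t ≠ 0) (d : ℕ) : (sin t / t) ^ d ≤ 1 := by
  rw [← sinc_of_ne_zero ht]
  calc sinc t ^ d ≤ |sinc t| ^ d := by rw [← abs_pow]; exact le_abs_self _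
    _ ≤ 1 := pow_le_one₀ (abs_nonneg _) (abs_sinc_le_one t)

theorem two_mul_natCast_mul_le_D (d : ℕ) {x : ℝ} (hx₀ : 0 < x) (hx : x < 1 / 2) :
    2 * d * x ≤ D d x := by
  set t := π * x with ht
  have ht₀ : 0 < t := by positivity
  have hjordan : 2 * x ≤ sin t := by
    have := mul_le_sin ht₀.le (by rw [ht]; nlinarith [pi_pos])
    rwa [ht, ← mul_assoc, div_mul_cancel₀ _ pi_ne_zero] at this
  have hbase : 1 + sin t ≤ 1 - cos t + sin t + sin t / t := by
    linarith [cos_lt_sin_div_self ht₀ (by rw [ht]; nlinarith [pi_pos])]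
  calc 2 * d * x = d * (2 * x) := by ring
    _ ≤ d * sin t := by gcongr
    _ ≤ (1 + sin t) ^ d - 1 := by linarith [one_add_mul_le_pow (by linarith : -2 ≤ sin t) d]
    _ ≤ D d x := by
      unfold D
      gcongr
      · linarith
      · exact sin_div_self_pow_le_one ht₀.ne' d

theorem stmt_8_general (r : ℝ) (x : ℕ → ℝ)
    (hx : ∀ d : ℕ, 1 ≤ d → x d ∈ Ioo (0 : ℝ) (1 / 4) ∧ D d (x d) = r) :
    Tendsto x atTop (nhds 0) := by
  have hxd : ∀ᶠ d in atTop, x d ∈ Ioo (0 : ℝ) (1 / 4) ∧ D d (x d) = r :=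
    (eventually_ge_atTop 1).mono hx
  refine tendsto_of_tendsto_of_tendsto_of_le_of_le' tendsto_const_nhds
    (tendsto_const_div_atTop_nhds_zero_nat (r / 2)) ?_ ?_
  · filter_upwards [hxd] with d ⟨hmem, _⟩ using hmem.1.le
  · filter_upwards [hxd, eventually_gt_atTop 0] with d ⟨⟨hx₀, hx₁⟩, hD⟩ hd
    have := two_mul_natCast_mul_le_D d hx₀ (by linarith)
    rw [le_div_iff₀ (by positivity)]
    linarith

theorem stmt_8 (r : ℝ) (hr : 0 < r) (x : ℕ → ℝ)
    (hx : ∀ d : ℕ, 1 ≤ d → x d ∈ Ioo (0 : ℝ) (1 / 4) ∧ D d (x d) = r) :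
    Tendsto x atTop (nhds 0) :=
  stmt_8_general r x hx
end

section
/- Let c > 1 and h(x) = -cos(x) + sin(x) + sin(x)/x. Then lim_{x→0⁺} ((1 + h(x))^{ln(c)/x} - c)/x = -c·ln(c)/6. -/
open Real Set Filter

noncomputable def h (x : ℝ) : ℝ := -Real.cos x + Real.sin x + Real.sin x / x

/-!
The Taylor bounds for `sin` and `cos` give `h x = x + x²/3 + O(x³)`, hence
`log (1 + h x) = x - x²/6 + O(x³)` and, for `x ≠ 0`,
`(log c / x) * log (1 + h x) = log c - (log c / 6) x + O(x²)`. Exponentiating,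
`(1 + h x) ^ (log c / x) = c - (c log c / 6) x + O(x²)`, and the limit is the coefficient of `x`.
-/

open Asymptotics Topology

section PowerComparison

variable {𝕜 : Type*} [NormedDivisionRing 𝕜] {l : Filter 𝕜}

lemma pow_isBigO_pow_of_le (hl : l ≤ 𝓝 0) {m n : ℕ} (hmn : m ≤ n) :
    (· ^ n : 𝕜 → 𝕜) =O[l] (· ^ m) := by
  rcases hmn.lt_or_eq with hlt | rfl
  · exact (isLittleO_pow_pow hlt).isBigO.mono hl
  · exact isBigO_refl _ _

lemma Asymptotics.IsBigO.div_id (hl : l ≤ 𝓝[≠] 0) {g : 𝕜 → 𝕜} {n : ℕ}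
    (hg : g =O[l] (· ^ (n + 1))) : (fun x => g x / x) =O[l] (· ^ n) := by
  refine (hg.mul (isBigO_refl (·⁻¹) l)).congr'
    (.of_forall fun x => (div_eq_mul_inv _ _).symm) ?_
  filter_upwards [hl self_mem_nhdsWithin] with x (hx : x ≠ 0)
  rw [pow_succ, mul_inv_cancel_right₀ hx]

end PowerComparison

lemma cos_sub_taylor_isBigO : (fun x => cos x - (1 - x ^ 2 / 2)) =O[𝓝 0] (· ^ 4) := by
  refine IsBigO.of_bound (5 / 96) ?_
  filter_upwards [Icc_mem_nhds (show (-1 : ℝ) < 0 by norm_num) one_pos] with x hx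
  simpa [mul_comm] using cos_bound (abs_le.2 hx)

lemma sin_sub_taylor_isBigO : (fun x => sin x - (x - x ^ 3 / 6)) =O[𝓝 0] (· ^ 5) := by
  refine IsBigO.of_bound (1 / 100) ?_
  filter_upwards [Icc_mem_nhds (show (-1 : ℝ) < 0 by norm_num) one_pos] with x hx
  simpa [div_eq_inv_mul] using sin_bound (abs_le.2 hx)

lemma sin_div_sub_taylor_isBigO :
    (fun x => sin x / x - (1 - x ^ 2 / 6)) =O[𝓝[≠] 0] (· ^ 4) := by
  refine ((sin_sub_taylor_isBigO.mono nhdsWithin_le_nhds).div_id le_rfl).congr' ?_ (.of_eq rfl)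
  filter_upwards [self_mem_nhdsWithin] with x (hx : x ≠ 0)
  field_simp

lemma h_sub_taylor_isBigO : (fun x => h x - (x + 1 / 3 * x ^ 2)) =O[𝓝[≠] 0] (· ^ 3) := by
  have hl : 𝓝[≠] (0 : ℝ) ≤ 𝓝 0 := nhdsWithin_le_nhds
  have hpow (n : ℕ) (hn : 3 ≤ n) : (· ^ n : ℝ → ℝ) =O[𝓝[≠] 0] (· ^ 3) :=
    pow_isBigO_pow_of_le hl hn
  have hcos := (cos_sub_taylor_isBigO.mono hl).trans (hpow 4 (by norm_num))
  have hsin := (sin_sub_taylor_isBigO.mono hl).trans (hpow 5 (by norm_num))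
  have hsinc := sin_div_sub_taylor_isBigO.trans (hpow 4 (by norm_num))
  have hcube := (isBigO_refl (· ^ 3) (𝓝[≠] (0 : ℝ))).const_mul_left (1 / 6)
  refine (((hcos.neg_left.add hsin).add hsinc).sub hcube).congr_left fun x => ?_
  simp only [h]
  ring

lemma log_one_add_sub_taylor_isBigO :
    (fun u => log (1 + u) - (u - u ^ 2 / 2)) =O[𝓝 0] (· ^ 3) := by
  refine IsBigO.of_bound 2 ?_
  filter_upwards [Icc_mem_nhds (show (-1 / 2 : ℝ) < 0 by norm_num) one_half_pos] with u hu
  have hu' : |u| ≤ 1 / 2 := abs_le.2 ⟨by linarith [hu.1], hu.2⟩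
  have hlog := abs_log_sub_add_sum_range_le (x := -u) (by rw [abs_neg]; linarith) 2
  simp only [Finset.sum_range_succ, Finset.range_one, Finset.sum_singleton, zero_add, pow_one,
    CharP.cast_eq_zero, div_one, Nat.reduceAdd, even_two, Even.neg_pow, Nat.cast_one,
    sub_neg_eq_add, abs_neg] at hlog
  rw [norm_eq_abs, norm_pow, norm_eq_abs]
  calc |log (1 + u) - (u - u ^ 2 / 2)| = |-u + u ^ 2 / (1 + 1) + log (1 + u)| := by ring_nf
    _ ≤ |u| ^ 3 / (1 - |u|) := hlog
    _ ≤ 2 * |u| ^ 3 := by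
      rw [div_le_iff₀ (by linarith)]
      nlinarith [pow_nonneg (abs_nonneg u) 3]

section Expansion

variable {l : Filter ℝ} {f : ℝ → ℝ} {a : ℝ}

lemma isBigO_id_of_sub_taylor_isBigO (hl : l ≤ 𝓝 0)
    (hf : (fun x => f x - (x + a * x ^ 2)) =O[l] (· ^ 3)) : f =O[l] fun x => x := by
  have hcube : (· ^ 3 : ℝ → ℝ) =O[l] fun x => x := by
    simpa using pow_isBigO_pow_of_le hl (by norm_num : 1 ≤ 3)
  have hsq : (· ^ 2 : ℝ → ℝ) =O[l] fun x => x := by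
    simpa using pow_isBigO_pow_of_le hl (by norm_num : 1 ≤ 2)
  exact ((hf.trans hcube).add ((isBigO_refl _ l).add (hsq.const_mul_left a))).congr_left
    fun x => by ring

lemma log_one_add_comp_sub_taylor_isBigO (hl : l ≤ 𝓝 0)
    (hf : (fun x => f x - (x + a * x ^ 2)) =O[l] (· ^ 3)) :
    (fun x => log (1 + f x) - (x + (a - 1 / 2) * x ^ 2)) =O[l] (· ^ 3) := by
  have hfO := isBigO_id_of_sub_taylor_isBigO hl hf
  have hf0 : Tendsto f l (𝓝 0) := hfO.trans_tendsto (tendsto_id.mono_left hl)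
  have hlog : (fun x => log (1 + f x) - (f x - f x ^ 2 / 2)) =O[l] (· ^ 3) :=
    (log_one_add_sub_taylor_isBigO.comp_tendsto hf0).trans (hfO.pow 3)
  have hdiff : (fun x => f x - x) =O[l] (· ^ 2) :=
    ((hf.trans (pow_isBigO_pow_of_le hl (by norm_num))).add
      ((isBigO_refl (· ^ 2) l).const_mul_left a)).congr_left fun x => by ring
  have hsq : (fun x => f x ^ 2 - x ^ 2) =O[l] (· ^ 3) :=
    (hdiff.mul (hfO.add (isBigO_refl (fun x => x) l))).congr (fun x => by ring)
      fun x => by ring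
  exact ((hlog.add hf).sub (hsq.const_mul_left (1 / 2))).congr_left fun x => by ring

lemma one_add_rpow_div_sub_taylor_isBigO (hl : l ≤ 𝓝[≠] 0)
    (hf : (fun x => f x - (x + a * x ^ 2)) =O[l] (· ^ 3)) (L : ℝ) :
    (fun x => (1 + f x) ^ (L / x) - (exp L + exp L * L * (a - 1 / 2) * x)) =O[l] (· ^ 2) := by
  have hl0 : l ≤ 𝓝 0 := hl.trans nhdsWithin_le_nhds
  have hf0 : Tendsto f l (𝓝 0) :=
    (isBigO_id_of_sub_taylor_isBigO hl0 hf).trans_tendsto (tendsto_id.mono_left hl0)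
  set y : ℝ → ℝ := fun x => L * (log (1 + f x) - x) / x
  have hy : (fun x => y x - L * (a - 1 / 2) * x) =O[l] (· ^ 2) := by
    refine (((log_one_add_comp_sub_taylor_isBigO hl0 hf).const_mul_left L).div_id hl).congr'
      ?_ (.of_eq rfl)
    filter_upwards [hl self_mem_nhdsWithin] with x (hx : x ≠ 0)
    simp only [y]
    field_simp
    ring
  have hyO : y =O[l] fun x => x :=
    ((hy.trans (by simpa using pow_isBigO_pow_of_le hl0 (by norm_num : 1 ≤ 2))).add
      ((isBigO_refl (fun x => x) l).const_mul_left (L * (a - 1 / 2)))).congr_left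
      fun x => by ring
  have hexp : (fun x => exp (y x) - (1 + y x)) =O[l] (· ^ 2) := by
    refine ((exp_sub_sum_range_isBigO_pow 2).comp_tendsto
      (hyO.trans_tendsto (tendsto_id.mono_left hl0))).trans (hyO.pow 2) |>.congr_left fun x => ?_
    simp [Finset.sum_range_succ]
  refine ((hexp.add hy).const_mul_left (exp L)).congr' ?_ (.of_eq rfl)
  filter_upwards [hl self_mem_nhdsWithin, hf0.eventually (Ioi_mem_nhds neg_one_lt_zero)]
    with x (hx : x ≠ 0) (hfx : -1 < f x)
  have hrpow : (1 + f x) ^ (L / x) = exp L * exp (y x) := by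
    rw [rpow_def_of_pos (by linarith), ← exp_add]
    congr 1
    simp only [y]
    field_simp
    ring
  rw [hrpow]
  ring

lemma tendsto_sub_div_of_sub_isBigO_sq (hl : l ≤ 𝓝[≠] 0) {g : ℝ → ℝ} {p q : ℝ}
    (hg : (fun x => g x - (p + q * x)) =O[l] (· ^ 2)) :
    Tendsto (fun x => (g x - p) / x) l (𝓝 q) := by
  have hrem : Tendsto (fun x => (g x - (p + q * x)) / x) l (𝓝 0) :=
    (hg.div_id hl).trans_tendsto
      (by simp only [pow_one]; exact tendsto_id.mono_left (hl.trans nhdsWithin_le_nhds))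
  refine (by simpa using hrem.add_const q : Tendsto _ l (𝓝 q)).congr' ?_
  filter_upwards [hl self_mem_nhdsWithin] with x (hx : x ≠ 0)
  field_simp
  ring

end Expansion

theorem stmt_12 (c : ℝ) (hc : 1 < c) :
    Tendsto (fun x : ℝ => ((1 + h x) ^ (Real.log c / x) - c) / x)
      (nhdsWithin 0 (Ioi 0)) (nhds (-(c * Real.log c) / 6)) := by
  have hl : 𝓝[>] (0 : ℝ) ≤ 𝓝[≠] 0 := nhdsWithin_mono _ fun x hx => ne_of_gt hx
  have key := one_add_rpow_div_sub_taylor_isBigO hl (h_sub_taylor_isBigO.mono hl) (log c)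
  rw [exp_log (by linarith)] at key
  convert tendsto_sub_div_of_sub_isBigO_sq hl key using 2
  ring
end

section
/- Let 0 < A ≤ B and set ω_d = (1/(πd))·ln(1 + A/B). Then lim_{d→∞} d·(A/B - D_d(ω_d)) = (A/(6B))·[ln(1 + A/B)]², where D_d(x) = (1 - cos(πx) + sin(πx) + sinc(πx))^d - (sinc(πx))^d. -/
open Real Set Filter

open Topology Asymptotics

/-!
Put `L = log (1 + A/B)`, so that `π ω_d = L/d`. Both bases of `D_d` have the form
`f t = 1 + a t + b t² + O(t³)` at `t = L/d`, namely
`1 - cos t + sin t + sin t / t = 1 + t + t²/3 + O(t³)` and `sin t / t = 1 - t²/6 + O(t³)`.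
Taking logarithms, `d log f (L/d) = a L + (b - a²/2) L²/d + O(1/d²)`, hence
`d (f (L/d) ^ d - exp (a L)) → exp (a L) (b - a²/2) L²`. The two limits are `-(1 + A/B) L²/6`
and `-L²/6`, and `d (A/B - D_d(ω_d))` is the second minus the first.
-/

theorem isBigO_log_one_add_sub :
    (fun u : ℝ => log (1 + u) - (u - u ^ 2 / 2)) =O[𝓝 0] fun u => u ^ 3 := by
  refine .of_bound 2 ?_
  filter_upwards [Metric.ball_mem_nhds (0 : ℝ) one_half_pos] with u hu
  rw [Metric.mem_ball, dist_zero_right, norm_eq_abs] at hu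
  have h := abs_log_sub_add_sum_range_le (x := -u) (by rw [abs_neg]; linarith) 2
  norm_num [Finset.sum_range_succ] at h
  rw [norm_eq_abs, norm_eq_abs, abs_pow]
  calc |log (1 + u) - (u - u ^ 2 / 2)| = |-u + u ^ 2 / 2 + log (1 + u)| := by ring_nf
    _ ≤ |u| ^ 3 / (1 - |u|) := h
    _ ≤ 2 * |u| ^ 3 := by
        rw [div_le_iff₀ (by linarith)]; nlinarith [pow_nonneg (abs_nonneg u) 3]

theorem isBigO_pow_pow_of_le {l : Filter ℝ} (hl : l ≤ 𝓝 0) {m n : ℕ} (hmn : m ≤ n) :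
    (fun t : ℝ => t ^ n) =O[l] fun t => t ^ m := by
  rcases hmn.eq_or_lt with rfl | hlt
  · exact isBigO_refl _ _
  · exact (isLittleO_pow_pow hlt).isBigO.mono hl

theorem isBigO_log_sub_of_isBigO {l : Filter ℝ} (hl : l ≤ 𝓝 0) {f : ℝ → ℝ} {a b : ℝ}
    (hf : (fun t => f t - (1 + a * t + b * t ^ 2)) =O[l] fun t => t ^ 3) :
    (fun t => log (f t) - (a * t + (b - a ^ 2 / 2) * t ^ 2)) =O[l] fun t => t ^ 3 := by
  set y := fun t => f t - 1
  have hquad : (fun t => a * t + b * t ^ 2) =O[l] fun t => t :=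
    ((isBigO_refl _ l).const_mul_left a).add
      (((isBigO_pow_pow_of_le hl (by norm_num : 1 ≤ 2)).const_mul_left b).congr_right (by simp))
  have hy : y =O[l] fun t => t := by
    have hcube : (fun t : ℝ => t ^ 3) =O[l] fun t => t :=
      (isBigO_pow_pow_of_le hl (by norm_num : 1 ≤ 3)).congr_right (by simp)
    exact ((hf.trans hcube).add hquad).congr_left fun t => by simp only [y]; ring
  have hy0 : Tendsto y l (𝓝 0) := hy.trans_tendsto hl
  have hlog := (isBigO_log_one_add_sub.comp_tendsto hy0).trans (hy.pow 3)
  have hdiff : (fun t => y t - a * t) =O[l] fun t => t ^ 2 := by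
    have h := (hf.trans (isBigO_pow_pow_of_le hl (by norm_num : 2 ≤ 3))).add
      ((isBigO_refl (fun t : ℝ => t ^ 2) l).const_mul_left b)
    exact h.congr_left fun t => by simp only [y]; ring
  have hsum : (fun t => y t + a * t) =O[l] fun t => t :=
    hy.add ((isBigO_refl _ l).const_mul_left a)
  have hsq := (hdiff.mul hsum).const_mul_left (1 / 2)
  -- log f - (a t + (b - a²/2) t²)
  --   = [log (1 + y) - (y - y²/2)] + [y - a t - b t²] - (y - a t) (y + a t) / 2
  refine ((hlog.add hf).sub hsq).congr' ?_ (by filter_upwards with t; ring)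
  filter_upwards with t
  simp only [y, Function.comp, add_sub_cancel]
  ring

theorem isBigO_sin_sub_self : (fun t => sin t - t) =O[𝓝 0] fun t => t ^ 3 := by
  refine .of_bound 1 ?_
  filter_upwards [(continuous_abs.tendsto' 0 0 abs_zero).eventually_le_const one_pos] with t ht
  have h5 : |t| ^ 5 ≤ |t| ^ 3 := pow_le_pow_of_le_one (abs_nonneg t) ht (by norm_num)
  rw [norm_eq_abs, norm_eq_abs, one_mul, abs_pow]
  calc |sin t - t| = |(sin t - (t - t ^ 3 / 6)) - t ^ 3 / 6| := by ring_nf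
    _ ≤ |sin t - (t - t ^ 3 / 6)| + |t ^ 3 / 6| := abs_sub _ _
    _ ≤ |t| ^ 5 / 100 + |t| ^ 3 / 6 := by
        rw [abs_div, abs_pow, abs_of_pos (by norm_num : (0:ℝ) < 6)]; gcongr; exact sin_bound ht
    _ ≤ |t| ^ 3 := by linarith [pow_nonneg (abs_nonneg t) 3]

theorem isBigO_cos_sub : (fun t => cos t - (1 - t ^ 2 / 2)) =O[𝓝 0] fun t => t ^ 3 := by
  refine .of_bound 1 ?_
  filter_upwards [(continuous_abs.tendsto' 0 0 abs_zero).eventually_le_const one_pos] with t ht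
  have h4 : |t| ^ 4 ≤ |t| ^ 3 := pow_le_pow_of_le_one (abs_nonneg t) ht (by norm_num)
  rw [norm_eq_abs, norm_eq_abs, one_mul, abs_pow]
  nlinarith [cos_bound ht, pow_nonneg (abs_nonneg t) 4]

theorem isBigO_sin_div_self_sub :
    (fun t => sin t / t - (1 - t ^ 2 / 6)) =O[𝓝[≠] 0] fun t => t ^ 3 := by
  refine .of_bound 1 ?_
  filter_upwards [self_mem_nhdsWithin, nhdsWithin_le_nhds
    ((continuous_abs.tendsto' 0 0 abs_zero).eventually_le_const one_pos)] with t (ht0 : t ≠ 0) ht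
  have h5 : |t| ^ 5 ≤ |t| ^ 4 := pow_le_pow_of_le_one (abs_nonneg t) ht (by norm_num)
  rw [norm_eq_abs, norm_eq_abs, one_mul, abs_pow]
  calc |sin t / t - (1 - t ^ 2 / 6)| = |sin t - (t - t ^ 3 / 6)| / |t| := by
        rw [← abs_div]; congr 1; field_simp
    _ ≤ |t| ^ 4 / |t| := by gcongr; linarith [sin_bound ht, pow_nonneg (abs_nonneg t) 4]
    _ = |t| ^ 3 := by field_simp

theorem isBigO_one_sub_cos_add_sin_add_sin_div_self_sub :
    (fun t => 1 - cos t + sin t + sin t / t - (1 + t + t ^ 2 / 3)) =O[𝓝[≠] 0]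
      fun t => t ^ 3 :=
  (((isBigO_sin_sub_self.sub isBigO_cos_sub).mono nhdsWithin_le_nhds).add
    isBigO_sin_div_self_sub).congr_left fun t => by ring

theorem tendsto_mul_exp_sub_one {α : Type*} {l : Filter α} {u e : α → ℝ} {c : ℝ}
    (hue : Tendsto (fun n => u n * e n) l (𝓝 c)) (he : Tendsto e l (𝓝 0)) :
    Tendsto (fun n => u n * (exp (e n) - 1)) l (𝓝 c) := by
  have hexp : (fun x => exp x - 1 - x) =O[𝓝 0] fun x => x ^ 2 := by
    simpa [Finset.sum_range_succ, sub_sub] using exp_sub_sum_range_isBigO_pow 2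
  have hrem : Tendsto (fun n => u n * (exp (e n) - 1 - e n)) l (𝓝 0) := by
    have h := (isBigO_refl u l).mul (hexp.comp_tendsto he)
    refine h.trans_tendsto ?_
    simpa [sq, ← mul_assoc] using hue.mul he
  simpa [mul_sub, sub_add_cancel] using hrem.add hue

theorem tendsto_div_natCast_nhdsNE {L : ℝ} (hL : L ≠ 0) :
    Tendsto (fun d : ℕ => L / d) atTop (𝓝[≠] 0) := by
  refine tendsto_nhdsWithin_iff.2 ⟨tendsto_const_div_atTop_nhds_zero_nat L, ?_⟩
  filter_upwards [eventually_ne_atTop 0] with d hd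
  exact div_ne_zero hL (Nat.cast_ne_zero.2 hd)

theorem tendsto_nat_mul_nat_mul_sub_of_isBigO {g : ℝ → ℝ} {a β L : ℝ} (hL : L ≠ 0)
    (hg : (fun t => g t - (a * t + β * t ^ 2)) =O[𝓝[≠] 0] fun t => t ^ 3) :
    Tendsto (fun d : ℕ => (d : ℝ) * (d * g (L / d) - a * L)) atTop (𝓝 (β * L ^ 2)) := by
  have hrem : Tendsto (fun d : ℕ => (d : ℝ) ^ 2 *
      (g (L / d) - (a * (L / d) + β * (L / d) ^ 2))) atTop (𝓝 0) := by
    refine ((isBigO_refl (fun d : ℕ => (d : ℝ) ^ 2) atTop).mul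
      (hg.comp_tendsto (tendsto_div_natCast_nhdsNE hL))).trans_tendsto ?_
    refine (tendsto_const_div_atTop_nhds_zero_nat (L ^ 3)).congr' ?_
    filter_upwards [eventually_ne_atTop 0] with d hd
    simp only [Function.comp]
    field_simp
  rw [← zero_add (β * L ^ 2)]
  refine (hrem.add_const (β * L ^ 2)).congr' ?_
  filter_upwards [eventually_ne_atTop 0] with d hd
  field_simp
  ring

theorem tendsto_nat_mul_pow_sub_exp {f : ℝ → ℝ} {a b L : ℝ} (hL : L ≠ 0)
    (hf : (fun t => f t - (1 + a * t + b * t ^ 2)) =O[𝓝[≠] 0] fun t => t ^ 3) :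
    Tendsto (fun d : ℕ => (d : ℝ) * (f (L / d) ^ d - exp (a * L))) atTop
      (𝓝 (exp (a * L) * ((b - a ^ 2 / 2) * L ^ 2))) := by
  have hf1 : Tendsto f (𝓝[≠] 0) (𝓝 1) := by
    have hrem := hf.trans_tendsto (((continuous_pow 3).tendsto' (0 : ℝ) 0
      (zero_pow three_ne_zero)).mono_left nhdsWithin_le_nhds)
    have hquad : Tendsto (fun t : ℝ => 1 + a * t + b * t ^ 2) (𝓝[≠] 0) (𝓝 1) :=
      ((by fun_prop : Continuous fun t : ℝ => 1 + a * t + b * t ^ 2).tendsto' 0 1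
        (by simp)).mono_left nhdsWithin_le_nhds
    simpa using hrem.add hquad
  have hpos : ∀ᶠ d : ℕ in atTop, 0 < f (L / d) :=
    (tendsto_div_natCast_nhdsNE hL).eventually (hf1.eventually (lt_mem_nhds one_pos))
  have hexp := tendsto_nat_mul_nat_mul_sub_of_isBigO hL
    (isBigO_log_sub_of_isBigO nhdsWithin_le_nhds hf)
  have hexp0 : Tendsto (fun d : ℕ => (d : ℝ) * log (f (L / d)) - a * L) atTop (𝓝 0) := by
    refine (hexp.div_atTop tendsto_natCast_atTop_atTop).congr' ?_
    filter_upwards [eventually_ne_atTop 0] with d hd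
    field_simp
  refine ((tendsto_mul_exp_sub_one hexp hexp0).const_mul (exp (a * L))).congr' ?_
  filter_upwards [hpos] with d hd
  have hpow : f (L / d) ^ d = exp (d * log (f (L / d))) := by rw [exp_nat_mul, exp_log hd]
  rw [hpow, exp_sub]
  field_simp

theorem stmt_17 (A B : ℝ) (hA : 0 < A) (hAB : A ≤ B) :
    Tendsto (fun d : ℕ => (d : ℝ) * (A / B - D d (Real.log (1 + A / B) / (π * d))))
      atTop (nhds (A / (6 * B) * (Real.log (1 + A / B)) ^ 2)) := by
  set c := A / B
  set L := log (1 + c)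
  have hc : 0 < c := div_pos hA (hA.trans_le hAB)
  have hexpL : exp L = 1 + c := exp_log (by linarith)
  have hL : L ≠ 0 := (log_pos (by linarith)).ne'
  have hF := tendsto_nat_mul_pow_sub_exp
    (f := fun t => 1 - cos t + sin t + sin t / t) (a := 1) (b := 1 / 3) hL
    (isBigO_one_sub_cos_add_sin_add_sin_div_self_sub.congr_left fun t => by ring)
  have hG := tendsto_nat_mul_pow_sub_exp (f := fun t => sin t / t) (a := 0) (b := -1 / 6) hL
    (isBigO_sin_div_self_sub.congr_left fun t => by ring)
  convert hG.sub hF using 2 with d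
  · rw [D, ← mul_div_assoc, mul_div_mul_left L (d : ℝ) pi_ne_zero, one_mul, hexpL, zero_mul,
      exp_zero]
    ring
  · rw [one_mul, hexpL, zero_mul, exp_zero]
    field_simp
    ring
end

section
/- Let 0 < A ≤ B and ω_d = (1/(πd))·ln(1 + A/B). Then lim_{d→∞} (1/d)·D_d'(ω_d) = π(1 + A/B), where D_d(x) = (1 - cos(πx) + sin(πx) + sinc(πx))^d - (sinc(πx))^d. -/
/-!
With `u = π x` and `f = 1 - cos + sin + sinc`, the chain rule gives
`D_d'(x) / d = π (f(u)^(d-1) f'(u) - sinc(u)^(d-1) sinc'(u))`. At `x = ω_d` we have `u = c / d`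
with `c = ln (1 + A/B)`. Since `f 0 = sinc 0 = 1`, the compound-interest limit gives
`f(c/d)^(d-1) → exp (c f'(0)) = 1 + A/B` and `sinc(c/d)^(d-1) → 1`, while `f'(0) = 1` and
`sinc'(0) = 0` because `sinc` is smooth and even.
-/

open Real Set Filter

open Topology

lemma analyticAt_sinc (x : ℝ) : AnalyticAt ℝ sinc x := by
  rcases eq_or_ne x 0 with rfl | hx
  · obtain ⟨p, hp⟩ := analyticAt_sin (x := (0 : ℝ))
    exact ⟨_, sinc_eq_dslope ▸ hp.has_fpower_series_dslope_fslope⟩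
  · refine (analyticAt_sin.div analyticAt_id hx).congr ?_
    filter_upwards [isOpen_ne.mem_nhds hx] with y hy
    exact (sinc_of_ne_zero hy).symm

@[fun_prop]
lemma contDiff_sinc {n : WithTop ℕ∞} : ContDiff ℝ n sinc :=
  AnalyticOnNhd.contDiff fun x _ => analyticAt_sinc x

@[fun_prop]
lemma differentiable_sinc : Differentiable ℝ sinc :=
  contDiff_sinc.differentiable one_ne_zero

lemma hasDerivAt_sinc_zero : HasDerivAt sinc 0 0 := by
  have h_even : deriv sinc 0 = -deriv sinc 0 := by
    simpa [sinc_neg] using deriv_comp_neg (f := sinc) (x := 0)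
  have h_zero : deriv sinc 0 = 0 := by linarith
  have h := (differentiable_sinc 0).hasDerivAt
  rwa [h_zero] at h

lemma tendsto_pow_sub_one_exp_of_tendsto {a : ℕ → ℝ} {t : ℝ}
    (ha : Tendsto (fun n : ℕ => n * (a n - 1)) atTop (𝓝 t)) :
    Tendsto (fun n : ℕ => a n ^ (n - 1)) atTop (𝓝 (exp t)) := by
  have ha_one : Tendsto a atTop (𝓝 1) := by
    have h := ((tendsto_inv_atTop_zero.comp tendsto_natCast_atTop_atTop).mul ha).const_add 1
    rw [zero_mul, add_zero] at h
    refine h.congr' ?_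
    filter_upwards [eventually_ne_atTop 0] with n hn
    simp [Nat.cast_ne_zero.2 hn]
  have h_pow := (Real.tendsto_one_add_pow_exp_of_tendsto ha).div ha_one one_ne_zero
  rw [div_one] at h_pow
  refine h_pow.congr' ?_
  filter_upwards [ha_one.eventually_ne one_ne_zero, eventually_ge_atTop 1] with n hn hn1
  rw [Pi.div_apply, add_sub_cancel, pow_sub₀ _ hn hn1, pow_one, div_eq_mul_inv]

lemma tendsto_mul_comp_div_sub_one {h : ℝ → ℝ} {L : ℝ} (hh : HasDerivAt h L 0) (h0 : h 0 = 1)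
    (c : ℝ) : Tendsto (fun n : ℕ => n * (h (c / n) - 1)) atTop (𝓝 (c * L)) := by
  rcases eq_or_ne c 0 with rfl | hc
  · simp [h0]
  have h_slope := hasDerivAt_iff_tendsto_slope.1 hh
  have h_div : Tendsto (fun n : ℕ => c / n) atTop (𝓝[≠] 0) := by
    refine tendsto_nhdsWithin_iff.2 ⟨tendsto_const_div_atTop_nhds_zero_nat c, ?_⟩
    filter_upwards [eventually_ne_atTop 0] with n hn
    exact div_ne_zero hc (Nat.cast_ne_zero.2 hn)
  refine ((h_slope.comp h_div).const_mul c).congr' ?_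
  filter_upwards [eventually_ne_atTop 0] with n hn
  have hn' : (n : ℝ) ≠ 0 := Nat.cast_ne_zero.2 hn
  simp only [Function.comp_apply, slope_def_field, h0, sub_zero]
  field_simp

lemma deriv_pow_comp_const_mul {h : ℝ → ℝ} (hh : Differentiable ℝ h) (a x : ℝ) (n : ℕ) :
    deriv (fun y => h (a * y) ^ n) x = n * h (a * x) ^ (n - 1) * (a * deriv h (a * x)) := by
  have h_lin : HasDerivAt (fun y => a * y) a x := by simpa using (hasDerivAt_id x).const_mul a
  exact (((hh (a * x)).hasDerivAt.comp x h_lin).pow n).deriv.trans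
    (by simp only [Function.comp_apply]; ring)

lemma tendsto_inv_mul_deriv_pow_comp_const_mul {h : ℝ → ℝ} (hh : ContDiff ℝ 1 h) (h0 : h 0 = 1)
    {a : ℝ} (ha : a ≠ 0) (c : ℝ) :
    Tendsto (fun n : ℕ => (1 / (n : ℝ)) * deriv (fun x => h (a * x) ^ n) (c / (a * n))) atTop
      (𝓝 (a * exp (c * deriv h 0) * deriv h 0)) := by
  have hd := hh.differentiable one_ne_zero
  have h_pow := tendsto_pow_sub_one_exp_of_tendsto
    (tendsto_mul_comp_div_sub_one (hd 0).hasDerivAt h0 c)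
  have h_deriv : Tendsto (fun n : ℕ => deriv h (c / n)) atTop (𝓝 (deriv h 0)) :=
    hh.continuous_deriv_one.continuousAt.tendsto.comp (tendsto_const_div_atTop_nhds_zero_nat c)
  refine ((h_pow.const_mul a).mul h_deriv).congr' ?_
  filter_upwards [eventually_ne_atTop 0] with n hn
  have hn' : (n : ℝ) ≠ 0 := Nat.cast_ne_zero.2 hn
  have hx : a * (c / (a * n)) = c / n := by field_simp
  rw [deriv_pow_comp_const_mul hd, hx]
  field_simp

lemma hasDerivAt_one_sub_cos_add_sin_add_sinc_zero :
    HasDerivAt (fun u => 1 - cos u + sin u + sinc u) 1 0 := by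
  simpa using (((hasDerivAt_const 0 1).fun_sub (hasDerivAt_cos 0)).fun_add
    (hasDerivAt_sin 0)).fun_add hasDerivAt_sinc_zero

lemma D_eventuallyEq (d : ℕ) {x : ℝ} (hx : x ≠ 0) :
    D d =ᶠ[𝓝 x] (fun y => (1 - cos (π * y) + sin (π * y) + sinc (π * y)) ^ d)
      - fun y => sinc (π * y) ^ d := by
  filter_upwards [isOpen_ne.mem_nhds hx] with y hy
  rw [Pi.sub_apply, sinc_of_ne_zero (mul_ne_zero pi_ne_zero hy), D]

theorem stmt_18 (A B : ℝ) (hA : 0 < A) (hAB : A ≤ B) :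
    Tendsto (fun d : ℕ => (1 / (d : ℝ)) * deriv (D d) (Real.log (1 + A / B) / (π * d)))
      atTop (nhds (π * (1 + A / B))) := by
  have h_one_lt : 1 < 1 + A / B := lt_add_of_pos_right 1 (div_pos hA (hA.trans_le hAB))
  have h_exp := exp_log (zero_lt_one.trans h_one_lt)
  have hc := (log_pos h_one_lt).ne'
  set c := Real.log (1 + A / B)
  have h_main := tendsto_inv_mul_deriv_pow_comp_const_mul
    (h := fun u => 1 - cos u + sin u + sinc u) (by fun_prop) (by simp) pi_ne_zero c
  have h_sinc := tendsto_inv_mul_deriv_pow_comp_const_mul contDiff_sinc sinc_zero pi_ne_zero c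
  rw [hasDerivAt_one_sub_cos_add_sin_add_sinc_zero.deriv] at h_main
  rw [hasDerivAt_sinc_zero.deriv] at h_sinc
  have h_lim : π * exp (c * 1) * 1 - π * exp (c * 0) * 0 = π * (1 + A / B) := by
    rw [mul_one, mul_one, mul_zero, sub_zero, h_exp]
  refine (h_lim ▸ h_main.sub h_sinc).congr' ?_
  filter_upwards [eventually_ne_atTop 0] with n hn
  have hx : c / (π * n) ≠ 0 := div_ne_zero hc (mul_ne_zero pi_ne_zero (Nat.cast_ne_zero.2 hn))
  rw [(D_eventuallyEq n hx).deriv_eq, deriv_sub (by fun_prop) (by fun_prop), mul_sub]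
end

section
/- Let 0 < A ≤ B. For each positive integer d let x_d be the unique number in (0, 1/4) with D_d(x_d) = A/B, and set ω_d = (1/(πd))·ln(1 + A/B). Then lim_{d→∞} (x_d - ω_d) / ( [ln(1 + A/B)]² / (6π(1 + B/A)d²) ) = 1. -/
/-!
With `t = π x` one has `D d x = F t ^ d - sinc t ^ d`, where `F t = 1 - cos t + sin t + sinc t`.
Since `F t = 1 + t + t² / 3 + O(t³)` and `sinc t = 1 - t² / 6 + O(t³)`, the logarithms satisfy
`log F t = t - t² / 6 + O(t³)` and `log sinc t = -t² / 6 + O(t³)`. At the trial points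
`x = (L + κ / d) / (π d)` this gives `d (D d x - (e^L - 1)) → e^L κ - (e^L - 1) L² / 6`, which changes
sign at `κ₀ = (e^L - 1) L² / (6 e^L)`. As `D d` is increasing, the solution `x_d` of `D d x_d = e^L - 1`
eventually lies between the trial points for `κ₀ - ε` and `κ₀ + ε`, so `π d² (x_d - L / (π d)) → κ₀`.
For `L = log (1 + A / B)` this is the claim.
-/

open Real Set Filter

open Topology Asymptotics

namespace Real

lemma sin_sub_self_isBigO : (fun t => sin t - t) =O[𝓝 0] (fun t => t ^ 3) := by
  refine IsBigO.of_bound 1 ?_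
  filter_upwards [Metric.closedBall_mem_nhds (0 : ℝ) one_pos] with t ht
  rw [Metric.mem_closedBall, dist_zero_right, norm_eq_abs] at ht
  have hsin := sin_bound ht
  have h5 : |t| ^ 5 ≤ |t| ^ 3 := pow_le_pow_of_le_one (abs_nonneg t) ht (by norm_num)
  simp only [norm_eq_abs, abs_pow, one_mul]
  calc |sin t - t| = |(sin t - (t - t ^ 3 / 6)) - t ^ 3 / 6| := by ring_nf
    _ ≤ |sin t - (t - t ^ 3 / 6)| + |t ^ 3 / 6| := abs_sub _ _
    _ ≤ |t| ^ 3 := by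
        rw [abs_div, abs_pow]; norm_num; linarith [pow_nonneg (abs_nonneg t) 3]

lemma cos_sub_isBigO : (fun t => cos t - (1 - t ^ 2 / 2)) =O[𝓝 0] (fun t => t ^ 4) := by
  refine IsBigO.of_bound 1 ?_
  filter_upwards [Metric.closedBall_mem_nhds (0 : ℝ) one_pos] with t ht
  rw [Metric.mem_closedBall, dist_zero_right, norm_eq_abs] at ht
  simp only [norm_eq_abs, abs_pow, one_mul]
  linarith [cos_bound ht, pow_nonneg (abs_nonneg t) 4]

lemma sinc_sub_isBigO : (fun t => sinc t - (1 - t ^ 2 / 6)) =O[𝓝 0] (fun t => t ^ 4) := by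
  refine IsBigO.of_bound 1 ?_
  filter_upwards [Metric.closedBall_mem_nhds (0 : ℝ) one_pos] with t ht
  rw [Metric.mem_closedBall, dist_zero_right, norm_eq_abs] at ht
  simp only [norm_eq_abs, abs_pow, one_mul]
  rcases eq_or_ne t 0 with rfl | ht0
  · simp
  have hsin := sin_bound ht
  have : sinc t - (1 - t ^ 2 / 6) = (sin t - (t - t ^ 3 / 6)) / t := by
    rw [sinc_of_ne_zero ht0]; field_simp
  rw [this, abs_div, div_le_iff₀ (abs_pos.2 ht0)]
  calc |sin t - (t - t ^ 3 / 6)| ≤ |t| ^ 5 / 100 := hsin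
    _ ≤ |t| ^ 4 * |t| := by rw [← pow_succ]; linarith [pow_nonneg (abs_nonneg t) 5]

lemma log_one_add_sub_isBigO :
    (fun w => log (1 + w) - (w - w ^ 2 / 2)) =O[𝓝 0] (fun w => w ^ 3) := by
  refine IsBigO.of_bound 2 ?_
  filter_upwards [Metric.closedBall_mem_nhds (0 : ℝ) (by norm_num : (0:ℝ) < 1 / 2)] with w hw
  rw [Metric.mem_closedBall, dist_zero_right, norm_eq_abs] at hw
  have h := abs_log_sub_add_sum_range_le (x := -w) (by rw [abs_neg]; linarith) 2
  norm_num [Finset.sum_range_succ] at h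
  simp only [norm_eq_abs, abs_pow]
  calc |log (1 + w) - (w - w ^ 2 / 2)| = |-w + w ^ 2 / 2 + log (1 + w)| := by ring_nf
    _ ≤ |w| ^ 3 / (1 - |w|) := h
    _ ≤ 2 * |w| ^ 3 := by
        rw [div_le_iff₀ (by linarith)]
        nlinarith [mul_nonneg (pow_nonneg (abs_nonneg w) 3) (by linarith : (0:ℝ) ≤ 1 - 2 * |w|)]

lemma one_sub_cos_add_sin_add_sinc_sub_isBigO :
    (fun t => (1 - cos t + sin t + sinc t) - (1 + 1 * t + 1 / 3 * t ^ 2)) =O[𝓝 0]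
      (fun t => t ^ 3) := by
  have h43 : (fun t : ℝ => t ^ 4) =O[𝓝 0] (fun t => t ^ 3) :=
    (isLittleO_pow_pow (by norm_num)).isBigO
  refine ((sin_sub_self_isBigO.sub (cos_sub_isBigO.trans h43)).add
    (sinc_sub_isBigO.trans h43)).congr_left fun t => ?_
  ring

lemma isBigO_log_sub_of_isBigO {f : ℝ → ℝ} {a b : ℝ}
    (hf : (fun t => f t - (1 + a * t + b * t ^ 2)) =O[𝓝 0] (fun t => t ^ 3)) :
    (fun t => log (f t) - (a * t + (b - a ^ 2 / 2) * t ^ 2)) =O[𝓝 0] (fun t => t ^ 3) := by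
  set w := fun t => f t - 1 with hw_def
  have hcube_sq : (fun t : ℝ => t ^ 3) =O[𝓝 0] (fun t => t ^ 2) :=
    (isLittleO_pow_pow (by norm_num)).isBigO
  have hsq_lin : (fun t : ℝ => t ^ 2) =O[𝓝 0] (fun t => t) := by
    simpa using (isLittleO_pow_pow (𝕜 := ℝ) (m := 1) (n := 2) (by norm_num)).isBigO
  have hw_sub : (fun t => w t - a * t) =O[𝓝 0] (fun t => t ^ 2) :=
    ((isBigO_refl (fun t : ℝ => t ^ 2) _).const_mul_left b |>.add (hf.trans hcube_sq)).congr_left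
      fun t => by simp only [hw_def]; ring
  have hw : w =O[𝓝 0] (fun t => t) :=
    ((hw_sub.trans hsq_lin).add ((isBigO_refl (fun t : ℝ => t) _).const_mul_left a)).congr_left
      fun t => by ring
  have hlog := (log_one_add_sub_isBigO.comp_tendsto (hw.trans_tendsto tendsto_id)).trans (hw.pow 3)
  have hprod : (fun t => (w t - a * t) * (w t + a * t)) =O[𝓝 0] (fun t => t ^ 3) :=
    (hw_sub.mul (hw.add ((isBigO_refl (fun t : ℝ => t) _).const_mul_left a))).congr_right
      fun t => by ring
  refine ((hlog.add hf).sub (hprod.const_mul_left (1 / 2))).congr_left fun t => ?_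
  simp only [hw_def, Function.comp_apply, add_sub_cancel]
  ring

lemma hasDerivAt_sinc {t : ℝ} (ht : t ≠ 0) :
    HasDerivAt sinc ((t * cos t - sin t) / t ^ 2) t := by
  have hsinc : (fun s => sin s / s) =ᶠ[𝓝 t] sinc := by
    filter_upwards [isOpen_ne.mem_nhds ht] with s hs
    exact (sinc_of_ne_zero hs).symm
  refine (((hasDerivAt_sin t).div (hasDerivAt_id t) ht).congr_of_eventuallyEq
    hsinc.symm).congr_deriv ?_
  simp only [id]
  ring

lemma mul_cos_lt_sin {t : ℝ} (h0 : 0 < t) (hπ : t < π) : t * cos t < sin t := by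
  rcases lt_or_ge t (π / 2) with h | h
  · have hcos : 0 < cos t := cos_pos_of_mem_Ioo ⟨by linarith, h⟩
    have := lt_tan h0 h
    rwa [tan_eq_sin_div_cos, lt_div_iff₀ hcos] at this
  · have hcos : cos t ≤ 0 := cos_nonpos_of_pi_div_two_le_of_le h (by linarith)
    nlinarith [sin_pos_of_pos_of_lt_pi h0 hπ]

lemma strictAntiOn_sinc : StrictAntiOn sinc (Icc 0 π) := by
  refine strictAntiOn_of_deriv_neg (convex_Icc 0 π) continuous_sinc.continuousOn fun t ht => ?_
  rw [interior_Icc] at ht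
  rw [(hasDerivAt_sinc ht.1.ne').deriv]
  exact div_neg_of_neg_of_pos (by linarith [mul_cos_lt_sin ht.1 ht.2]) (pow_pos ht.1 2)

lemma strictMonoOn_one_sub_cos_add_sin_add_sinc :
    StrictMonoOn (fun t => 1 - cos t + sin t + sinc t) (Icc 0 (π / 2)) := by
  refine strictMonoOn_of_deriv_pos (convex_Icc 0 (π / 2)) (by fun_prop) fun t ht => ?_
  rw [interior_Icc] at ht
  obtain ⟨h0, hπ⟩ := ht
  have hderiv := (((hasDerivAt_const t (1 : ℝ)).fun_sub (hasDerivAt_cos t)).fun_add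
    (hasDerivAt_sin t)).fun_add (hasDerivAt_sinc h0.ne')
  rw [hderiv.deriv]
  have hsin : 0 ≤ sin t := sin_nonneg_of_nonneg_of_le_pi h0.le (by linarith)
  have hcos : 0 ≤ cos t := cos_nonneg_of_mem_Icc ⟨by linarith, hπ.le⟩
  -- `sin t + cos t ≥ sin t ^ 2 + cos t ^ 2 = 1` on the first quadrant
  have hsum : 1 ≤ sin t + cos t := by
    nlinarith [sin_sq_add_cos_sq t, sin_le_one t, cos_le_one t]
  have hsinc_deriv : -(t / 2) ≤ (t * cos t - sin t) / t ^ 2 := by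
    rw [le_div_iff₀ (by positivity)]
    nlinarith [one_sub_sq_div_two_le_cos (x := t), sin_le h0.le]
  have : t < 2 := by linarith [pi_lt_four]
  linarith

end Real

lemma tendsto_zero_of_tendsto_nat_mul {u : ℕ → ℝ} {α : ℝ}
    (h : Tendsto (fun n : ℕ => (n : ℝ) * u n) atTop (𝓝 α)) : Tendsto u atTop (𝓝 0) := by
  have := h.mul (tendsto_inv_atTop_nhds_zero_nat (𝕜 := ℝ))
  rw [mul_zero] at this
  refine this.congr' ?_
  filter_upwards [eventually_ne_atTop 0] with n hn
  have : (n : ℝ) ≠ 0 := Nat.cast_ne_zero.2 hn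
  field_simp

theorem HasDerivAt.tendsto_nat_mul_sub {f : ℝ → ℝ} {f' m α : ℝ} (hf : HasDerivAt f f' m)
    {v : ℕ → ℝ} (hv : Tendsto (fun n : ℕ => (n : ℝ) * (v n - m)) atTop (𝓝 α)) :
    Tendsto (fun n : ℕ => (n : ℝ) * (f (v n) - f m)) atTop (𝓝 (f' * α)) := by
  have hv_lim : Tendsto v atTop (𝓝 m) := by
    simpa using (tendsto_zero_of_tendsto_nat_mul hv).add_const m
  have hrem :
      Tendsto (fun n : ℕ => (n : ℝ) * (f (v n) - f m - f' * (v n - m))) atTop (𝓝 0) := by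
    have h := ((isBigO_refl (fun n : ℕ => (n : ℝ)) atTop).mul_isLittleO
      (hf.isLittleO.comp_tendsto hv_lim)).trans_isBigO (hv.isBigO_one ℝ)
    exact (isLittleO_one_iff ℝ).1 (h.congr_left fun n => by simp [mul_comm])
  simpa using (hv.const_mul f').add hrem |>.congr fun n => by ring

lemma tendsto_nat_mul_sub_of_isBigO {h : ℝ → ℝ} {a b : ℝ}
    (hh : (fun t => h t - (a * t + b * t ^ 2)) =O[𝓝 0] (fun t => t ^ 3)) (L κ : ℝ) :
    Tendsto (fun n : ℕ => (n : ℝ) * (n * h ((L + κ / n) / n) - a * L)) atTop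
      (𝓝 (a * κ + b * L ^ 2)) := by
  have hnum : Tendsto (fun n : ℕ => L + κ / n) atTop (𝓝 L) := by
    simpa using tendsto_const_nhds.add (tendsto_const_div_atTop_nhds_zero_nat κ)
  have ht : Tendsto (fun n : ℕ => (L + κ / n) / n) atTop (𝓝 0) :=
    hnum.div_atTop tendsto_natCast_atTop_atTop
  have hcube : Tendsto (fun n : ℕ => (n : ℝ) ^ 2 * ((L + κ / n) / n) ^ 3) atTop (𝓝 0) := by
    refine tendsto_zero_of_tendsto_nat_mul <| (hnum.pow 3).congr' ?_
    filter_upwards [eventually_ne_atTop 0] with n hn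
    have : (n : ℝ) ≠ 0 := Nat.cast_ne_zero.2 hn
    field_simp
  have herr := ((isBigO_refl (fun n : ℕ => (n : ℝ) ^ 2) atTop).mul
    (hh.comp_tendsto ht)).trans_tendsto hcube
  have hmain := (tendsto_const_nhds (x := a * κ)).add ((hnum.pow 2).const_mul b) |>.add herr
  rw [add_zero] at hmain
  refine hmain.congr' ?_
  filter_upwards [eventually_ne_atTop 0] with n hn
  have : (n : ℝ) ≠ 0 := Nat.cast_ne_zero.2 hn
  simp only [Function.comp_apply]
  field_simp
  ring

-- Also at `x = 0`, where the junk value `0 / 0 = 0` in `D` and `sinc 0 = 1` give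
-- `0 ^ d - 0 ^ d = 1 - 1`.
lemma D_eq_sinc (d : ℕ) (x : ℝ) :
    D d x = (1 - cos (π * x) + sin (π * x) + sinc (π * x)) ^ d - sinc (π * x) ^ d := by
  rcases eq_or_ne x 0 with rfl | hx
  · simp [D]
  · simp only [D, sinc_of_ne_zero (mul_ne_zero pi_ne_zero hx)]

theorem strictMonoOn_D {d : ℕ} (hd : d ≠ 0) : StrictMonoOn (D d) (Icc 0 (1 / 2)) := by
  intro x hx y hy hxy
  have hmem : ∀ z ∈ Icc (0 : ℝ) (1 / 2), π * z ∈ Icc 0 (π / 2) := fun z hz =>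
    ⟨by nlinarith [pi_pos, hz.1], by nlinarith [pi_pos, hz.2]⟩
  have hF := strictMonoOn_one_sub_cos_add_sin_add_sinc
  have hF0 : 0 ≤ 1 - cos (π * x) + sin (π * x) + sinc (π * x) := by
    have := hF.monotoneOn ⟨le_rfl, by positivity⟩ (hmem x hx) (hmem x hx).1
    simp only [cos_zero, sin_zero, sinc_zero] at this
    linarith
  have hG := strictAntiOn_sinc.antitoneOn
  have hsub : Icc 0 (π / 2) ⊆ Icc 0 π := Icc_subset_Icc_right (by linarith [pi_pos])
  have hG0 : 0 ≤ sinc (π * y) := by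
    have := hG (hsub (hmem y hy)) ⟨pi_pos.le, le_rfl⟩ (hsub (hmem y hy)).2
    rwa [sinc_of_ne_zero pi_ne_zero, sin_pi, zero_div] at this
  rw [D_eq_sinc, D_eq_sinc]
  have hlt := hF (hmem x hx) (hmem y hy) (mul_lt_mul_of_pos_left hxy pi_pos)
  have hle := hG (hsub (hmem x hx)) (hsub (hmem y hy)) (mul_le_mul_of_nonneg_left hxy.le pi_pos.le)
  have := pow_lt_pow_left₀ hlt hF0 hd
  have := pow_le_pow_left₀ hG0 hle d
  linarith

theorem tendsto_nat_mul_D_sub (L κ : ℝ) :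
    Tendsto (fun d : ℕ => (d : ℝ) * (D d ((L + κ / d) / (π * d)) - (exp L - 1))) atTop
      (𝓝 (exp L * κ - (exp L - 1) * L ^ 2 / 6)) := by
  have hF := (hasDerivAt_exp _).tendsto_nat_mul_sub <| tendsto_nat_mul_sub_of_isBigO
    (isBigO_log_sub_of_isBigO one_sub_cos_add_sin_add_sinc_sub_isBigO) L κ
  have hG := (hasDerivAt_exp _).tendsto_nat_mul_sub <| tendsto_nat_mul_sub_of_isBigO
    (isBigO_log_sub_of_isBigO (a := 0) (b := -1 / 6) <| sinc_sub_isBigO.trans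
      (isLittleO_pow_pow (by norm_num)).isBigO |>.congr_left fun t => by ring) L κ
  have ht : Tendsto (fun d : ℕ => (L + κ / d) / d) atTop (𝓝 0) := by
    have := tendsto_const_nhds (x := L) |>.add (tendsto_const_div_atTop_nhds_zero_nat κ)
    exact (add_zero L ▸ this).div_atTop tendsto_natCast_atTop_atTop
  have hpos : ∀ᶠ d : ℕ in atTop, 0 < 1 - cos ((L + κ / d) / d) + sin ((L + κ / d) / d)
      + sinc ((L + κ / d) / d) ∧ 0 < sinc ((L + κ / d) / d) := by
    have hcont : Continuous (fun t => 1 - cos t + sin t + sinc t) := by fun_prop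
    refine ((hcont.tendsto 0).comp ht).eventually (lt_mem_nhds ?_) |>.and
      ((continuous_sinc.tendsto 0).comp ht |>.eventually (lt_mem_nhds ?_)) <;> simp
  have hlim : exp (1 * L) * (1 * κ + (1 / 3 - 1 ^ 2 / 2) * L ^ 2)
      - exp (0 * L) * (0 * κ + (-1 / 6 - 0 ^ 2 / 2) * L ^ 2)
      = exp L * κ - (exp L - 1) * L ^ 2 / 6 := by
    simp only [one_mul, zero_mul, exp_zero]; ring
  rw [← hlim]
  refine (hF.sub hG).congr' ?_
  filter_upwards [hpos, eventually_ne_atTop 0] with d ⟨hF0, hG0⟩ hd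
  have hd' : (d : ℝ) ≠ 0 := Nat.cast_ne_zero.2 hd
  rw [D_eq_sinc, show π * ((L + κ / d) / (π * d)) = (L + κ / d) / d by field_simp,
    exp_nat_mul, exp_log hF0, exp_nat_mul, exp_log hG0]
  simp only [one_mul, zero_mul, exp_zero]
  ring

lemma eventually_mem_Icc_of_pos {L : ℝ} (hL : 0 < L) (κ : ℝ) :
    ∀ᶠ d : ℕ in atTop, (L + κ / d) / (π * d) ∈ Icc 0 (1 / 2) := by
  have hnum := tendsto_const_nhds (x := L) |>.add (tendsto_const_div_atTop_nhds_zero_nat κ)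
  rw [add_zero] at hnum
  have hy : Tendsto (fun d : ℕ => (L + κ / d) / (π * d)) atTop (𝓝 0) :=
    hnum.div_atTop (tendsto_natCast_atTop_atTop.const_mul_atTop pi_pos)
  filter_upwards [hnum.eventually_const_lt hL,
    hy.eventually_le_const (by norm_num : (0 : ℝ) < 1 / 2)] with d h0 h1
  exact ⟨div_nonneg h0.le (by positivity), h1⟩

theorem tendsto_mul_sq_sub_of_D_eq {L : ℝ} (hL : 0 < L) {x : ℕ → ℝ}
    (hx : ∀ᶠ d in atTop, x d ∈ Icc 0 (1 / 2) ∧ D d (x d) = exp L - 1) :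
    Tendsto (fun d : ℕ => π * d ^ 2 * (x d - L / (π * d))) atTop
      (𝓝 ((exp L - 1) * L ^ 2 / (6 * exp L))) := by
  set y : ℕ → ℝ → ℝ := fun d κ => (L + κ / d) / (π * d) with hy_def
  have hy_mono : ∀ d : ℕ, d ≠ 0 → StrictMono (y d) := by
    intro d hd a b hab
    have : (0 : ℝ) < d := by positivity
    simp only [hy_def]
    gcongr
  have hx_eq : ∀ᶠ d : ℕ in atTop, x d = y d (π * d ^ 2 * (x d - L / (π * d))) := by
    filter_upwards [eventually_ne_atTop 0] with d hd
    have : (d : ℝ) ≠ 0 := Nat.cast_ne_zero.2 hd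
    simp only [hy_def]
    field_simp
    ring
  have hexp : 0 < 6 * exp L := by positivity
  rw [tendsto_order]
  refine ⟨fun κ hκ => ?_, fun κ hκ => ?_⟩
  · have hneg : exp L * κ - (exp L - 1) * L ^ 2 / 6 < 0 := by
      rw [lt_div_iff₀ hexp] at hκ; linarith
    filter_upwards [(tendsto_nat_mul_D_sub L κ).eventually_lt_const hneg, hx, hx_eq,
      eventually_mem_Icc_of_pos hL κ, eventually_ne_atTop 0] with d hD ⟨hx_mem, hDx⟩ hxy hy hd
    have hDy : D d (y d κ) < D d (x d) := by
      rw [hDx]; by_contra! h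
      exact hD.not_ge (mul_nonneg d.cast_nonneg (by linarith))
    rw [(strictMonoOn_D hd).lt_iff_lt hy hx_mem, hxy, (hy_mono d hd).lt_iff_lt] at hDy
    exact hDy
  · have hpos : 0 < exp L * κ - (exp L - 1) * L ^ 2 / 6 := by
      rw [gt_iff_lt, div_lt_iff₀ hexp] at hκ; linarith
    filter_upwards [(tendsto_nat_mul_D_sub L κ).eventually_const_lt hpos, hx, hx_eq,
      eventually_mem_Icc_of_pos hL κ, eventually_ne_atTop 0] with d hD ⟨hx_mem, hDx⟩ hxy hy hd
    have hDy : D d (x d) < D d (y d κ) := by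
      rw [hDx]; by_contra! h
      exact hD.not_ge (mul_nonpos_of_nonneg_of_nonpos d.cast_nonneg (by linarith))
    rw [(strictMonoOn_D hd).lt_iff_lt hx_mem hy, hxy, (hy_mono d hd).lt_iff_lt] at hDy
    exact hDy

theorem stmt_19 (A B : ℝ) (hA : 0 < A) (hAB : A ≤ B) (x : ℕ → ℝ)
    (hx : ∀ d : ℕ, 1 ≤ d → x d ∈ Ioo (0 : ℝ) (1 / 4) ∧ D d (x d) = A / B) :
    Tendsto (fun d : ℕ =>
        (x d - Real.log (1 + A / B) / (π * d)) /
          ((Real.log (1 + A / B)) ^ 2 / (6 * π * (1 + B / A) * (d : ℝ) ^ 2)))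
      atTop (nhds 1) := by
  have hB : 0 < B := hA.trans_le hAB
  have hr : 0 < A / B := div_pos hA hB
  set L := log (1 + A / B)
  have hL : 0 < L := log_pos (by linarith)
  have hexp : exp L = 1 + A / B := exp_log (by linarith)
  have hq := tendsto_mul_sq_sub_of_D_eq hL (x := x) <| by
    filter_upwards [eventually_ge_atTop 1] with d hd
    obtain ⟨⟨h0, h1⟩, hD⟩ := hx d hd
    exact ⟨⟨h0.le, by linarith⟩, by rw [hD, hexp]; ring⟩
  have hκ : (exp L - 1) * L ^ 2 / (6 * exp L) ≠ 0 := by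
    rw [hexp, add_sub_cancel_left]; positivity
  rw [← div_self hκ]
  refine (hq.div_const _).congr' ?_
  filter_upwards [eventually_ne_atTop 0] with d hd
  have : (d : ℝ) ≠ 0 := Nat.cast_ne_zero.2 hd
  rw [hexp, add_sub_cancel_left]
  field_simp [hA.ne', hB.ne', hL.ne']
  ring
end
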